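/- The projection of the LP relaxation P of the ideal non-extended formulation onto the (x, y) variables equals the convex hull of the graph of the ReLU neuron: {(x, y) : ∃ z, 0 ≤ z ≤ 1 ∧ (x, y, z) ∈ P} = convexHull ℝ gr. -/

import Mathlib

open Finset

/-- The affine function `f(x) = w · x + b`. -/
noncomputable def fAff {η : ℕ} (w : Fin η → ℝ) (b : ℝ) (x : Fin η → ℝ) : ℝ :=
  (∑ i, w i * x i) + b

/-- The rectified linear unit. -/
noncomputable def ReLU (v : ℝ) : ℝ := max 0 v

/-- The box `[L, U]`. -/
def Box {η : ℕ} (L U : Fin η → ℝ) : Set (Fin η → ℝ) :=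
  {x | ∀ i, L i ≤ x i ∧ x i ≤ U i}

/-- `L̆ i`. -/
noncomputable def Lbreve {η : ℕ} (w L U : Fin η → ℝ) (i : Fin η) : ℝ :=
  if 0 ≤ w i then L i else U i

/-- `Ŭ i`. -/
noncomputable def Ubreve {η : ℕ} (w L U : Fin η → ℝ) (i : Fin η) : ℝ :=
  if 0 ≤ w i then U i else L i

/-- The graph of the ReLU neuron over the box. -/
noncomputable def grSet {η : ℕ} (w : Fin η → ℝ) (b : ℝ) (L U : Fin η → ℝ) :
    Set ((Fin η → ℝ) × ℝ) :=
  {p | ∃ x ∈ Box L U, p = (x, ReLU (fAff w b x))}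

/-- The LP relaxation `P` of the ideal non-extended formulation. A point is
`(x, y, z)` with `x = p.1`, `y = p.2.1`, `z = p.2.2`. -/
noncomputable def Pset {η : ℕ} (w : Fin η → ℝ) (b : ℝ) (L U : Fin η → ℝ) :
    Set ((Fin η → ℝ) × ℝ × ℝ) :=
  {p | p.1 ∈ Box L U ∧ 0 ≤ p.2.1 ∧ 0 ≤ p.2.2 ∧ p.2.2 ≤ 1 ∧ fAff w b p.1 ≤ p.2.1 ∧
    ∀ I : Finset (Fin η), (∀ i ∈ I, w i ≠ 0) →
      p.2.1 ≤ (∑ i ∈ I, w i * (p.1 i - Lbreve w L U i * (1 - p.2.2)))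
        + (b + ∑ i ∈ Iᶜ, w i * Ubreve w L U i) * p.2.2}

/-- The LP relaxation `R` of the big-`M` formulation. -/
noncomputable def Rset {η : ℕ} (w : Fin η → ℝ) (b : ℝ) (L U : Fin η → ℝ) :
    Set ((Fin η → ℝ) × ℝ × ℝ) :=
  {p | p.1 ∈ Box L U ∧ 0 ≤ p.2.1 ∧ 0 ≤ p.2.2 ∧ p.2.2 ≤ 1 ∧ fAff w b p.1 ≤ p.2.1 ∧
    p.2.1 ≤ fAff w b p.1 - ((∑ i, w i * Lbreve w L U i) + b) * (1 - p.2.2) ∧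
    p.2.1 ≤ ((∑ i, w i * Ubreve w L U i) + b) * p.2.2}

/-- The LP relaxation `Q` of the multiple-choice extended formulation. A point is
`(x, y, z, x⁰, x¹, y⁰, y¹)`. -/
noncomputable def Qset {η : ℕ} (w : Fin η → ℝ) (b : ℝ) (L U : Fin η → ℝ) :
    Set ((Fin η → ℝ) × ℝ × ℝ × (Fin η → ℝ) × (Fin η → ℝ) × ℝ × ℝ) :=
  {q | match q with
    | (x, y, z, x0, x1, y0, y1) =>
      x = x0 + x1 ∧ y = y0 + y1 ∧ y0 = 0 ∧
      (∑ i, w i * x0 i) + b * (1 - z) ≤ 0 ∧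
      y1 = (∑ i, w i * x1 i) + b * z ∧ 0 ≤ y1 ∧
      (∀ i, L i * (1 - z) ≤ x0 i ∧ x0 i ≤ U i * (1 - z)) ∧
      (∀ i, L i * z ≤ x1 i ∧ x1 i ≤ U i * z) ∧
      0 ≤ z ∧ z ≤ 1}

/-!
The inequalities defining `P` are affine in `(x, y, z)`, so its projection is convex, and a graph
point `(x, ReLU (f x))` lifts to `P` with `z = 0` or `z = 1` according to the sign of `f x`.

Conversely, for `(x, y, z) ∈ P` it suffices to write `x = (1 - z) x⁰ + z x¹` with `x⁰, x¹` in the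
box and `z f(x¹) = y`: then `(1 - z) f(x⁰) = f x - y ≤ 0`, so `(x, y)` is the same convex
combination of the graph points over `x⁰` and `x¹`. With `s = z x¹`, the admissible `s` form a box
on which `w ⬝ᵥ s` takes the value `z (w ⬝ᵥ x) ≤ y - b z` at `s = z x`, and whose maximum
`∑ᵢ min (wᵢ Ŭᵢ z) (wᵢ (xᵢ - L̆ᵢ (1 - z)))` is at least `y - b z`: this is the inequality of `P`
for the set `I` of indices where the second term is the smaller one. By connectedness,
`w ⬝ᵥ s = y - b z` for some admissible `s`.
-/

lemma ReLU_mul_of_nonneg {c : ℝ} (hc : 0 ≤ c) (v : ℝ) : ReLU (c * v) = c * ReLU v := by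
  simp [ReLU, mul_max_of_nonneg _ _ hc]

theorem Finset.sum_min_eq_sum_filter_add_sum_compl {ι M : Type*} [Fintype ι] [DecidableEq ι]
    [AddCommMonoid M] [LinearOrder M] (a c : ι → M) :
    ∑ i, min (a i) (c i) =
      ∑ i ∈ univ.filter (fun i => c i < a i), c i +
        ∑ i ∈ (univ.filter fun i => c i < a i)ᶜ, a i := by
  rw [← sum_add_sum_compl (univ.filter fun i => c i < a i)]
  congr 1 <;> refine sum_congr rfl fun i hi => ?_ <;>
    simp only [mem_compl, mem_filter, mem_univ, true_and] at hi
  · exact min_eq_right hi.le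
  · exact min_eq_left (not_lt.1 hi)

section BoxSplit

variable {ι : Type*}

lemma exists_mem_Icc_smul_eq {L U p s : ι → ℝ} {z : ℝ} (hz : 0 ≤ z)
    (hp : p ∈ Set.Icc L U) (hs : s ∈ Set.Icc (z • L) (z • U)) :
    ∃ q ∈ Set.Icc L U, z • q = s := by
  rcases hz.eq_or_lt with rfl | hz
  · simp only [zero_smul, Set.Icc_self, Set.mem_singleton_iff] at hs
    exact ⟨p, hp, by simp [hs]⟩
  · refine ⟨z⁻¹ • s, ⟨?_, ?_⟩, smul_inv_smul₀ hz.ne' s⟩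
    · exact (le_inv_smul_iff_of_pos hz).2 hs.1
    · exact (inv_smul_le_iff_of_pos hz).2 hs.2

def boxSplit (L U x : ι → ℝ) (z : ℝ) : Set (ι → ℝ) :=
  Set.Icc (z • L ⊔ (x - (1 - z) • U)) (z • U ⊓ (x - (1 - z) • L))

lemma mem_boxSplit {L U x s : ι → ℝ} {z : ℝ} :
    s ∈ boxSplit L U x z ↔
      s ∈ Set.Icc (z • L) (z • U) ∧ x - s ∈ Set.Icc ((1 - z) • L) ((1 - z) • U) := by
  simp only [boxSplit, Set.mem_Icc, sup_le_iff, le_inf_iff, sub_le_comm (a := x),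
    le_sub_comm (b := x)]
  tauto

lemma smul_mem_boxSplit {L U x : ι → ℝ} {z : ℝ} (hx : x ∈ Set.Icc L U)
    (hz0 : 0 ≤ z) (hz1 : z ≤ 1) : z • x ∈ boxSplit L U x z := by
  have hx' : x - z • x = (1 - z) • x := by rw [sub_smul, one_smul]
  rw [mem_boxSplit, hx']
  exact ⟨⟨smul_le_smul_of_nonneg_left hx.1 hz0, smul_le_smul_of_nonneg_left hx.2 hz0⟩,
    ⟨smul_le_smul_of_nonneg_left hx.1 (sub_nonneg.2 hz1),
      smul_le_smul_of_nonneg_left hx.2 (sub_nonneg.2 hz1)⟩⟩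

end BoxSplit

section IdealFormulation

variable {η : ℕ} (w : Fin η → ℝ) (b : ℝ) (L U : Fin η → ℝ)

lemma box_eq_Icc : Box L U = Set.Icc L U := by
  ext x
  simp [Box, Set.mem_Icc, Pi.le_def, forall_and]

lemma fAff_eq_dotProduct (x : Fin η → ℝ) : fAff w b x = w ⬝ᵥ x + b := rfl

lemma fAff_smul_add_smul (x x' : Fin η → ℝ) {a c : ℝ} (hac : a + c = 1) :
    fAff w b (a • x + c • x') = a * fAff w b x + c * fAff w b x' := by
  simp only [fAff_eq_dotProduct, dotProduct_add, dotProduct_smul, smul_eq_mul]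
  linear_combination -b * hac

lemma mul_Lbreve_le_mul {x : Fin η → ℝ} (hx : x ∈ Box L U) (i : Fin η) :
    w i * Lbreve w L U i ≤ w i * x i := by
  unfold Lbreve
  split_ifs with hw
  · exact mul_le_mul_of_nonneg_left (hx i).1 hw
  · exact mul_le_mul_of_nonpos_left (hx i).2 (not_le.1 hw).le

lemma mul_le_mul_Ubreve {x : Fin η → ℝ} (hx : x ∈ Box L U) (i : Fin η) :
    w i * x i ≤ w i * Ubreve w L U i := by
  unfold Ubreve
  split_ifs with hw
  · exact mul_le_mul_of_nonneg_left (hx i).2 hw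
  · exact mul_le_mul_of_nonpos_left (hx i).1 (not_le.1 hw).le

noncomputable def idealBound (I : Finset (Fin η)) (x : Fin η → ℝ) (z : ℝ) : ℝ :=
  (∑ i ∈ I, w i * (x i - Lbreve w L U i * (1 - z))) + (b + ∑ i ∈ Iᶜ, w i * Ubreve w L U i) * z

lemma mem_Pset_iff {x : Fin η → ℝ} {y z : ℝ} :
    (x, y, z) ∈ Pset w b L U ↔ x ∈ Box L U ∧ 0 ≤ y ∧ 0 ≤ z ∧ z ≤ 1 ∧ fAff w b x ≤ y ∧
      ∀ I : Finset (Fin η), (∀ i ∈ I, w i ≠ 0) → y ≤ idealBound w b L U I x z :=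
  Iff.rfl

lemma idealBound_smul_add_smul (I : Finset (Fin η)) (x x' : Fin η → ℝ) (z z' : ℝ) {a c : ℝ}
    (hac : a + c = 1) :
    idealBound w b L U I (a • x + c • x') (a * z + c * z') =
      a * idealBound w b L U I x z + c * idealBound w b L U I x' z' := by
  have hsum : ∑ i ∈ I, w i * ((a • x + c • x') i - Lbreve w L U i * (1 - (a * z + c * z'))) =
      a * ∑ i ∈ I, w i * (x i - Lbreve w L U i * (1 - z)) +
        c * ∑ i ∈ I, w i * (x' i - Lbreve w L U i * (1 - z')) := by
    rw [mul_sum, mul_sum, ← sum_add_distrib]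
    refine sum_congr rfl fun i _ => ?_
    simp only [Pi.add_apply, Pi.smul_apply, smul_eq_mul]
    linear_combination (w i * Lbreve w L U i) * hac
  rw [idealBound, idealBound, idealBound, hsum]
  ring

lemma convex_Pset : Convex ℝ (Pset w b L U) := by
  rintro ⟨x, y, z⟩ hp ⟨x', y', z'⟩ hp' a c ha hc hac
  rw [mem_Pset_iff] at hp hp'
  obtain ⟨hx, hy, hz0, hz1, hf, hI⟩ := hp
  obtain ⟨hx', hy', hz0', hz1', hf', hI'⟩ := hp'
  simp only [Prod.smul_mk, Prod.mk_add_mk, smul_eq_mul, mem_Pset_iff]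
  refine ⟨?_, by positivity, by positivity, ?_, ?_, fun I hIw => ?_⟩
  · rw [box_eq_Icc L U] at hx hx' ⊢
    exact convex_Icc L U hx hx' ha hc hac
  · nlinarith
  · rw [fAff_smul_add_smul w b x x' hac]
    nlinarith
  · rw [idealBound_smul_add_smul w b L U I x x' z z' hac]
    nlinarith [hI I hIw, hI' I hIw]

noncomputable def projPset : Set ((Fin η → ℝ) × ℝ) :=
  {p | ∃ z : ℝ, 0 ≤ z ∧ z ≤ 1 ∧ (p.1, p.2, z) ∈ Pset w b L U}

lemma convex_projPset : Convex ℝ (projPset w b L U) := by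
  rintro p ⟨z, hz0, hz1, hp⟩ q ⟨z', hz0', hz1', hq⟩ a c ha hc hac
  have hmem := convex_Pset w b L U hp hq ha hc hac
  refine ⟨a * z + c * z', (mem_Pset_iff w b L U).1 hmem |>.2.2.1,
    (mem_Pset_iff w b L U).1 hmem |>.2.2.2.1, ?_⟩
  simpa only [Prod.smul_mk, Prod.mk_add_mk, smul_eq_mul, Prod.fst_add, Prod.snd_add,
    Prod.smul_fst, Prod.smul_snd] using hmem

lemma grSet_subset_projPset : grSet w b L U ⊆ projPset w b L U := by
  rintro _ ⟨x, hx, rfl⟩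
  rcases le_total (fAff w b x) 0 with hf | hf
  · refine ⟨0, le_rfl, zero_le_one, (mem_Pset_iff w b L U).2
      ⟨hx, le_max_left _ _, le_rfl, zero_le_one, le_max_right _ _, fun I _ => ?_⟩⟩
    simp only [ReLU, max_eq_left hf, idealBound, sub_zero, mul_one, mul_zero, add_zero]
    exact sum_nonneg fun i _ => by linarith [mul_Lbreve_le_mul w L U hx i]
  · refine ⟨1, zero_le_one, le_rfl, (mem_Pset_iff w b L U).2
      ⟨hx, le_max_left _ _, zero_le_one, le_rfl, le_max_right _ _, fun I _ => ?_⟩⟩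
    simp only [ReLU, max_eq_right hf, idealBound, sub_self, mul_zero, sub_zero, mul_one]
    rw [fAff, ← sum_add_sum_compl I]
    linarith [sum_le_sum fun i (_ : i ∈ Iᶜ) => mul_le_mul_Ubreve w L U hx i]

lemma sub_mul_le_sum_min {x : Fin η → ℝ} {y z : ℝ} (hp : (x, y, z) ∈ Pset w b L U) :
    y - b * z ≤
      ∑ i, min (w i * (Ubreve w L U i * z)) (w i * (x i - Lbreve w L U i * (1 - z))) := by
  have hbound := ((mem_Pset_iff w b L U).1 hp).2.2.2.2.2
    (univ.filter fun i => w i * (x i - Lbreve w L U i * (1 - z)) < w i * (Ubreve w L U i * z))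
    (fun i hi hw => by simp [hw] at hi)
  simp only [idealBound, add_mul, sum_mul, mul_assoc] at hbound
  rw [sum_min_eq_sum_filter_add_sum_compl]
  linarith

lemma exists_mem_boxSplit_sum_min_le {x : Fin η → ℝ} {z : ℝ}
    (hne : (boxSplit L U x z).Nonempty) :
    ∃ s ∈ boxSplit L U x z,
      ∑ i, min (w i * (Ubreve w L U i * z)) (w i * (x i - Lbreve w L U i * (1 - z))) ≤
        w ⬝ᵥ s := by
  set A := z • L ⊔ (x - (1 - z) • U)
  set B := z • U ⊓ (x - (1 - z) • L)
  have hAB : A ≤ B := Set.nonempty_Icc.1 hne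
  refine ⟨fun i => if 0 ≤ w i then B i else A i, ⟨fun i => ?_, fun i => ?_⟩,
    sum_le_sum fun i _ => ?_⟩
  · show A i ≤ if 0 ≤ w i then B i else A i
    split_ifs
    · exact hAB i
    · exact le_rfl
  · show (if 0 ≤ w i then B i else A i) ≤ B i
    split_ifs
    · exact le_rfl
    · exact hAB i
  · simp only [Ubreve, Lbreve, A, B]
    split_ifs with hw
    · rw [Pi.inf_apply, mul_min_of_nonneg _ _ hw]
      simp only [Pi.smul_apply, Pi.sub_apply, smul_eq_mul]
      apply le_of_eq
      congr 1 <;> ring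
    · have hmax : ∀ p q : ℝ, w i * max p q = min (w i * p) (w i * q) :=
        smul_max_of_nonpos (not_le.1 hw).le
      rw [Pi.sup_apply, hmax]
      simp only [Pi.smul_apply, Pi.sub_apply, smul_eq_mul]
      apply le_of_eq
      congr 1 <;> ring

lemma mem_convexHull_grSet_of_split {x x₀ x₁ : Fin η → ℝ} {y z : ℝ} (hz0 : 0 ≤ z) (hz1 : z ≤ 1)
    (hx₀ : x₀ ∈ Box L U) (hx₁ : x₁ ∈ Box L U) (hx : (1 - z) • x₀ + z • x₁ = x)
    (hy : z * fAff w b x₁ = y) (hy0 : 0 ≤ y) (hfy : fAff w b x ≤ y) :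
    (x, y) ∈ convexHull ℝ (grSet w b L U) := by
  have hf : (1 - z) * fAff w b x₀ + z * fAff w b x₁ = fAff w b x := by
    rw [← hx, fAff_smul_add_smul w b x₀ x₁ (by ring)]
  have h₀ : (1 - z) * ReLU (fAff w b x₀) = 0 := by
    rw [← ReLU_mul_of_nonneg (sub_nonneg.2 hz1)]
    exact max_eq_left (by linarith)
  have h₁ : z * ReLU (fAff w b x₁) = y := by
    rw [← ReLU_mul_of_nonneg hz0, hy]
    exact max_eq_right hy0
  have hcomb : (x, y) = (1 - z) • (x₀, ReLU (fAff w b x₀)) + z • (x₁, ReLU (fAff w b x₁)) := by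
    simp only [Prod.smul_mk, Prod.mk_add_mk, smul_eq_mul, h₀, h₁, hx, zero_add]
  have hgr : ∀ x' ∈ Box L U, (x', ReLU (fAff w b x')) ∈ convexHull ℝ (grSet w b L U) :=
    fun x' hx' => subset_convexHull ℝ _ ⟨x', hx', rfl⟩
  rw [hcomb]
  exact convex_convexHull ℝ _ (hgr x₀ hx₀) (hgr x₁ hx₁) (sub_nonneg.2 hz1) hz0 (by ring)

lemma projPset_subset_convexHull : projPset w b L U ⊆ convexHull ℝ (grSet w b L U) := by
  rintro ⟨x, y⟩ ⟨z, -, -, hp⟩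
  dsimp only at hp
  obtain ⟨hx, hy0, hz0, hz1, hfy, -⟩ := (mem_Pset_iff w b L U).1 hp
  rw [box_eq_Icc L U] at hx
  have hzx := smul_mem_boxSplit hx hz0 hz1
  have hzx_le : w ⬝ᵥ (z • x) ≤ y - b * z := by
    rw [fAff_eq_dotProduct] at hfy
    rw [dotProduct_smul, smul_eq_mul]
    nlinarith [mul_le_mul_of_nonneg_left hfy hz0, mul_nonneg (sub_nonneg.2 hz1) hy0]
  obtain ⟨smax, hsmax, hsmax_ge⟩ := exists_mem_boxSplit_sum_min_le w L U ⟨_, hzx⟩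
  have hconn : IsPreconnected (boxSplit L U x z) := (convex_Icc _ _).isPreconnected
  obtain ⟨s, hs, hst : w ⬝ᵥ s = y - b * z⟩ := hconn.intermediate_value hzx hsmax
    (continuous_const.dotProduct continuous_id : Continuous (w ⬝ᵥ ·)).continuousOn
    ⟨hzx_le, (sub_mul_le_sum_min w b L U hp).trans hsmax_ge⟩
  obtain ⟨hs₁, hs₀⟩ := mem_boxSplit.1 hs
  obtain ⟨x₁, hx₁, rfl⟩ := exists_mem_Icc_smul_eq hz0 hx hs₁
  obtain ⟨x₀, hx₀, hx₀_eq⟩ := exists_mem_Icc_smul_eq (sub_nonneg.2 hz1) hx hs₀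
  rw [← box_eq_Icc L U] at hx₀ hx₁
  refine mem_convexHull_grSet_of_split w b L U hz0 hz1 hx₀ hx₁ ?_ ?_ hy0 hfy
  · rw [hx₀_eq, sub_add_cancel]
  · rw [fAff_eq_dotProduct, mul_add, ← smul_eq_mul, ← dotProduct_smul, hst]
    ring

end IdealFormulation

theorem projection_eq_convexHull_general {η : ℕ} (w : Fin η → ℝ) (b : ℝ) (L U : Fin η → ℝ) :
    {p : (Fin η → ℝ) × ℝ |
        ∃ z : ℝ, 0 ≤ z ∧ z ≤ 1 ∧ (p.1, p.2, z) ∈ Pset w b L U}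
      = convexHull ℝ (grSet w b L U) :=
  (projPset_subset_convexHull w b L U).antisymm
    (convexHull_min (grSet_subset_projPset w b L U) (convex_projPset w b L U))

/-- The projection of `P` onto the `(x, y)` variables is the convex hull of the graph
of the ReLU neuron. -/
theorem projection_eq_convexHull {η : ℕ} (w : Fin η → ℝ) (b : ℝ) (L U : Fin η → ℝ)
    (hLU : ∀ i, L i < U i) :
    {p : (Fin η → ℝ) × ℝ |
        ∃ z : ℝ, 0 ≤ z ∧ z ≤ 1 ∧ (p.1, p.2, z) ∈ Pset w b L U}
      = convexHull ℝ (grSet w b L U) :=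
  projection_eq_convexHull_general w b L U
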